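/- Let m be a positive integer and let φ : ℍ×ℂ×ℂ → ℂ be holomorphic and satisfy, for all τ ∈ ℍ and z, w ∈ ℂ: φ(τ, z+1, w) = φ(τ,z,w) and e^{2πim(τ+2z)} φ(τ, z+τ, w) = φ(τ,z,w). Then φ admits a theta decomposition: for all (τ,z,w), φ(τ,z,w) = Σ_{ℓ=0}^{2m−1} h_ℓ(τ,w) · θ_{m,ℓ}(τ,z), where h_ℓ(τ,w) := e^{−πiℓ²τ/(2m)} ∫_0^1 φ(τ, t, w) e^{−2πiℓt} dt. -/

import Mathlib

open Complex MeasureTheory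

/-- The theta series `θ_{m,ℓ}(τ,z) = Σ_{r ≡ ℓ (mod 2m)} e^{2πiτr²/(4m)} e^{2πirz}`. -/
noncomputable def thetaComp (m : ℕ) (ℓ : ℤ) (τ z : ℂ) : ℂ :=
  ∑' r : {r : ℤ // r ≡ ℓ [ZMOD (2 * (m : ℤ))]},
    Complex.exp (2 * (Real.pi : ℂ) * I * τ * ((r : ℤ) : ℂ) ^ 2 / (4 * (m : ℂ))) *
      Complex.exp (2 * (Real.pi : ℂ) * I * ((r : ℤ) : ℂ) * z)

/-- The theta coefficient `h_ℓ(τ,w) = e^{−πiℓ²τ/(2m)} ∫_0^1 φ(τ,t,w) e^{−2πiℓt} dt`. -/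
noncomputable def thetaCoef (m : ℕ) (ℓ : ℤ) (φ : ℂ → ℂ → ℂ → ℂ) (τ w : ℂ) : ℂ :=
  Complex.exp (-(Real.pi : ℂ) * I * ((ℓ : ℂ)) ^ 2 * τ / (2 * (m : ℂ))) *
    ∫ t in (0 : ℝ)..1, φ τ ((t : ℂ)) w * Complex.exp (-2 * (Real.pi : ℂ) * I * (ℓ : ℂ) * (t : ℂ))

/-!
Fix `τ` and `w`; then `g = φ(τ, ·, w)` is entire and `1`-periodic, with Fourier coefficients
`cₙ = ∫₀¹ g(t) e^{-2πint} dt`. Moving the segment of integration up by `τ` (Cauchy's theorem,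
the vertical sides cancelling by periodicity) turns the elliptic law into
`c_{n+2m} = e^{2πi(n+m)τ} cₙ`, i.e. `hₙ = e^{-πin²τ/(2m)} cₙ` depends only on `n mod 2m`.
Thus `cₙ e^{2πinz} = hₙ e^{2πinz + πin²τ/(2m)}` is a bounded multiple of a Jacobi theta term, so
the Fourier series of `g` converges absolutely, hence to `g`, and grouping its terms by residue
class mod `2m` gives `Σ_ℓ h_ℓ θ_{m,ℓ}`.
-/

open scoped Real
open Function intervalIntegral

theorem integral_add_mul_I_eq_of_periodic {F : ℂ → ℂ} (hF : Differentiable ℂ F)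
    (hp : Periodic F 1) (y : ℝ) :
    ∫ t in (0 : ℝ)..1, F (t + y * I) = ∫ t in (0 : ℝ)..1, F t := by
  have h := integral_boundary_rect_eq_zero_of_differentiableOn F 0 ⟨1, y⟩ hF.differentiableOn
  have hside : ∀ s : ℝ, F ((1 : ℝ) + s * I) = F ((0 : ℝ) + s * I) := fun s => by
    simpa [add_comm] using hp (s * I)
  simp only [zero_re, zero_im, ofReal_zero, zero_mul, add_zero, hside] at h
  linear_combination -h

theorem integral_comp_add_eq_of_periodic {F : ℂ → ℂ} (hF : Differentiable ℂ F)
    (hp : Periodic F 1) (s : ℂ) :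
    ∫ t in (0 : ℝ)..1, F (t + s) = ∫ t in (0 : ℝ)..1, F t := by
  have hps : Periodic (fun t : ℝ => F (t + s.im * I)) 1 := fun t => by
    simpa [add_right_comm] using hp (t + s.im * I)
  calc ∫ t in (0 : ℝ)..1, F (t + s)
      = ∫ t in (0 : ℝ)..1, F (↑(t + s.re) + s.im * I) := integral_congr fun t _ => by
        simp only [ofReal_add]
        rw [add_assoc, re_add_im]
    _ = ∫ t in (0 : ℝ)..1, F (t + s.im * I) := by
        rw [integral_comp_add_right (fun t : ℝ => F (t + s.im * I)), zero_add, add_comm]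
        simpa using hps.intervalIntegral_add_eq s.re 0
    _ = ∫ t in (0 : ℝ)..1, F t := integral_add_mul_I_eq_of_periodic hF hp s.im

noncomputable def unitFourierCoeff (f : ℝ → ℂ) (n : ℤ) : ℂ :=
  ∫ t in (0 : ℝ)..1, f t * exp (-2 * π * I * n * t)

theorem unitFourierCoeff_eq_fourierCoeff_lift {f : ℝ → ℂ} (hp : Periodic f 1) (n : ℤ) :
    unitFourierCoeff f n = fourierCoeff (hp.lift : UnitAddCircle → ℂ) n := by
  rw [fourierCoeff_eq_intervalIntegral _ n 0, div_one, one_smul, zero_add, unitFourierCoeff]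
  refine integral_congr fun t _ => ?_
  rw [Periodic.lift_coe, fourier_coe_apply, smul_eq_mul, mul_comm]
  push_cast
  ring_nf

theorem hasSum_unitFourierCoeff_mul_exp {f : ℝ → ℂ} (hc : Continuous f) (hp : Periodic f 1)
    (hs : Summable (unitFourierCoeff f)) (x : ℝ) :
    HasSum (fun n : ℤ => unitFourierCoeff f n * exp (2 * π * I * n * x)) (f x) := by
  let F : C(UnitAddCircle, ℂ) := ⟨hp.lift, continuous_coinduced_dom.mpr hc⟩
  have hcoeff : unitFourierCoeff f = fourierCoeff F :=
    funext (unitFourierCoeff_eq_fourierCoeff_lift hp)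
  rw [hcoeff] at hs ⊢
  simpa [fourier_coe_apply, F] using
    has_pointwise_sum_fourier_series_of_summable hs (x : UnitAddCircle)

section Entire

variable {g : ℂ → ℂ}

theorem unitFourierCoeff_comp_add (hg : Differentiable ℂ g) (hp : Periodic g 1) (s : ℂ)
    (n : ℤ) :
    unitFourierCoeff (fun t => g (t + s)) n =
      exp (2 * π * I * n * s) * unitFourierCoeff (fun t => g t) n := by
  set F : ℂ → ℂ := fun ζ => g ζ * exp (-2 * π * I * n * ζ)
  have hF : Differentiable ℂ F := hg.mul (by fun_prop)
  have hFp : Periodic F 1 := fun ζ => by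
    simp only [F, hp ζ, mul_add, exp_add, mul_one]
    rw [show -2 * π * I * n = ((-n : ℤ) : ℂ) * (2 * π * I) by push_cast; ring,
      exp_int_mul_two_pi_mul_I, mul_one]
  calc unitFourierCoeff (fun t => g (t + s)) n
      = ∫ t in (0 : ℝ)..1, exp (2 * π * I * n * s) * F (t + s) := integral_congr fun t _ => by
        simp only [F]
        rw [mul_left_comm, ← exp_add]
        ring_nf
    _ = _ := by
        rw [intervalIntegral.integral_const_mul, integral_comp_add_eq_of_periodic hF hFp]
        rfl

theorem hasSum_unitFourierCoeff_mul_exp_of_differentiable (hg : Differentiable ℂ g)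
    (hp : Periodic g 1) {z : ℂ}
    (hs : Summable fun n : ℤ => unitFourierCoeff (fun t => g t) n * exp (2 * π * I * n * z)) :
    HasSum (fun n : ℤ => unitFourierCoeff (fun t => g t) n * exp (2 * π * I * n * z)) (g z) := by
  let f : ℝ → ℂ := fun t => g (t + z.im * I)
  have hfp : Periodic f 1 := fun t => by
    simpa [f, add_right_comm] using hp (t + z.im * I)
  have hcoeff : ∀ n : ℤ, unitFourierCoeff f n =
      unitFourierCoeff (fun t => g t) n * exp (2 * π * I * n * (z.im * I)) := fun n => by
    rw [unitFourierCoeff_comp_add hg hp, mul_comm]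
  have hfs : Summable (unitFourierCoeff f) := by
    rw [funext hcoeff]
    refine Summable.of_norm ((summable_norm_iff.mpr hs).congr fun n => ?_)
    simp only [norm_mul, norm_exp]
    congr 2
    simp
  have hfc : Continuous f := hg.continuous.comp (by fun_prop)
  have := hasSum_unitFourierCoeff_mul_exp hfc hfp hfs z.re
  convert this using 1
  · funext n
    rw [hcoeff, mul_assoc _ (cexp _), ← exp_add]
    congr 2
    conv_lhs => rw [← re_add_im z]
    ring
  · simp [f, re_add_im]

end Entire

section Elliptic

variable {m : ℕ} {τ : ℂ} {g : ℂ → ℂ}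

theorem unitFourierCoeff_add_two_mul (hg : Differentiable ℂ g) (hp : Periodic g 1)
    (he : ∀ z, exp (2 * π * I * m * (τ + 2 * z)) * g (z + τ) = g z) (n : ℤ) :
    unitFourierCoeff (fun t => g t) (n + 2 * m) =
      exp (2 * π * I * (n + m) * τ) * unitFourierCoeff (fun t => g t) n := by
  have hshift : ∀ z, g (z + τ) = exp (-(2 * π * I * m * (τ + 2 * z))) * g z := fun z => by
    rw [← he z, ← mul_assoc, ← exp_add, neg_add_cancel, exp_zero, one_mul]
  have hτ : unitFourierCoeff (fun t => g (t + τ)) n =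
      exp (-(2 * π * I * m * τ)) * unitFourierCoeff (fun t => g t) (n + 2 * m) := by
    rw [unitFourierCoeff, unitFourierCoeff, ← intervalIntegral.integral_const_mul]
    refine integral_congr fun t _ => ?_
    have hexp : exp (-(2 * π * I * m * (τ + 2 * t))) * exp (-2 * π * I * n * t) =
        exp (-(2 * π * I * m * τ)) * exp (-2 * π * I * ((n + 2 * m : ℤ) : ℂ) * t) := by
      rw [← exp_add, ← exp_add]
      push_cast
      ring_nf
    rw [hshift]
    linear_combination g t * hexp
  calc unitFourierCoeff (fun t => g t) (n + 2 * m)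
      = exp (2 * π * I * m * τ) *
          (exp (-(2 * π * I * m * τ)) * unitFourierCoeff (fun t => g t) (n + 2 * m)) := by
        rw [← mul_assoc, ← exp_add, add_neg_cancel, exp_zero, one_mul]
    _ = exp (2 * π * I * m * τ) *
          (exp (2 * π * I * n * τ) * unitFourierCoeff (fun t => g t) n) := by
        rw [← hτ, unitFourierCoeff_comp_add hg hp]
    _ = _ := by
        rw [← mul_assoc, ← exp_add]
        ring_nf

theorem periodic_exp_mul_unitFourierCoeff (hg : Differentiable ℂ g) (hp : Periodic g 1)
    (he : ∀ z, exp (2 * π * I * m * (τ + 2 * z)) * g (z + τ) = g z) :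
    Periodic (fun n : ℤ => exp (-π * I * n ^ 2 * τ / (2 * m)) * unitFourierCoeff (fun t => g t) n)
      (2 * m) := fun n => by
  rcases eq_or_ne m 0 with rfl | hm
  · simp
  simp only
  rw [unitFourierCoeff_add_two_mul hg hp he, ← mul_assoc, ← exp_add]
  congr 2
  push_cast
  field_simp
  ring

end Elliptic

theorem Function.Periodic.eq_of_modEq {α : Type*} {a : ℤ → α} {N : ℤ} (ha : Periodic a N)
    {r ℓ : ℤ} (h : r ≡ ℓ [ZMOD N]) : a r = a ℓ := by
  obtain ⟨k, hk⟩ := h.symm.dvd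
  rw [show r = ℓ + k * N by linear_combination hk]
  exact ha.int_mul k ℓ

theorem Function.Periodic.hasSum_mul_sum_range {𝕜 : Type*} [RCLike 𝕜]
    {N : ℕ} [NeZero N] {a T : ℤ → 𝕜} (ha : Periodic a N) (hT : Summable T) :
    HasSum (fun n => a n * T n)
      (∑ ℓ ∈ Finset.range N, a ℓ * ∑' r : {r : ℤ // r ≡ ℓ [ZMOD N]}, T r) := by
  obtain ⟨C, hC⟩ : ∃ C, ∀ n, ‖a n‖ ≤ C := by
    refine ⟨∑ k ∈ Finset.range N, ‖a k‖, fun n => ?_⟩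
    obtain ⟨k, ⟨hk0, hkN⟩, hnk⟩ := ha.exists_mem_Ico₀ (by exact_mod_cast Nat.pos_of_neZero N) n
    lift k to ℕ using hk0
    rw [hnk]
    exact Finset.single_le_sum (f := fun k : ℕ => ‖a k‖) (fun _ _ => norm_nonneg _)
      (Finset.mem_range.mpr (by omega))
  have hs : Summable fun n => a n * T n :=
    .of_norm_bounded (hT.norm.mul_left C) fun n => by
      rw [norm_mul]
      gcongr
      exact hC n
  have hfib := hs.hasSum.tsum_fiberwise (fun n : ℤ => (n : ZMod N))
  convert hs.hasSum using 1
  rw [← (hasSum_fintype _).unique hfib]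
  refine Finset.sum_nbij' (↑) ZMod.val (fun _ _ => Finset.mem_univ _)
    (fun c _ => Finset.mem_range.mpr (ZMod.val_lt c))
    (fun ℓ hℓ => ZMod.val_cast_of_lt (Finset.mem_range.mp hℓ)) (fun c _ => ZMod.natCast_zmod_val c)
    fun ℓ _ => ?_
  have hmem : ∀ r : ℤ, r ≡ ℓ [ZMOD N] ↔ r ∈ (fun n : ℤ => (n : ZMod N)) ⁻¹' {(ℓ : ZMod N)} :=
    fun r => by simp [← ZMod.intCast_eq_intCast_iff]
  rw [← (Equiv.subtypeEquivRight hmem).tsum_eq, ← tsum_mul_left]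
  exact tsum_congr fun r => congrArg (· * T r) (ha.eq_of_modEq r.2).symm

theorem thetaComp_eq_tsum_jacobiTheta₂_term (m : ℕ) (ℓ : ℤ) (τ z : ℂ) :
    thetaComp m ℓ τ z =
      ∑' r : {r : ℤ // r ≡ ℓ [ZMOD 2 * m]}, jacobiTheta₂_term r z (τ / (2 * m)) :=
  tsum_congr fun r => by
    rw [jacobiTheta₂_term, ← exp_add]
    ring_nf

theorem unitFourierCoeff_mul_exp_eq_mul_jacobiTheta₂_term (m : ℕ) (τ z : ℂ) (f : ℝ → ℂ) (n : ℤ) :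
    unitFourierCoeff f n * exp (2 * π * I * n * z) =
      exp (-π * I * n ^ 2 * τ / (2 * m)) * unitFourierCoeff f n *
        jacobiTheta₂_term n z (τ / (2 * m)) := by
  rw [jacobiTheta₂_term, mul_right_comm _ (unitFourierCoeff f n), ← exp_add]
  ring_nf

theorem theta_decomposition_general (m : ℕ) (hm : 0 < m) (φ : ℂ → ℂ → ℂ → ℂ)
    (hz_hol : ∀ τ w : ℂ, 0 < τ.im → Differentiable ℂ (fun z => φ τ z w))
    (hperiodic : ∀ τ z w : ℂ, 0 < τ.im → φ τ (z + 1) w = φ τ z w)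
    (helliptic : ∀ τ z w : ℂ, 0 < τ.im →
      Complex.exp (2 * (Real.pi : ℂ) * I * (m : ℂ) * (τ + 2 * z)) * φ τ (z + τ) w = φ τ z w) :
    ∀ τ z w : ℂ, 0 < τ.im →
      φ τ z w = ∑ ℓ ∈ Finset.range (2 * m),
        thetaCoef m (ℓ : ℤ) φ τ w * thetaComp m (ℓ : ℤ) τ z := by
  intro τ z w hτ
  have : NeZero (2 * m) := ⟨by positivity⟩
  have hg := hz_hol τ w hτ
  have hp : Periodic (φ τ · w) 1 := fun z => hperiodic τ z w hτ
  have hcoef : Periodic (fun n : ℤ => thetaCoef m n φ τ w) (2 * m) :=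
    periodic_exp_mul_unitFourierCoeff hg hp fun z => helliptic τ z w hτ
  have hterm : Summable fun n : ℤ => jacobiTheta₂_term n z (τ / (2 * m)) :=
    (summable_jacobiTheta₂_term_iff _ _).mpr <| by
      rw [← Nat.cast_ofNat, ← Nat.cast_mul, div_natCast_im]
      positivity
  have hsum :=
    (show Periodic _ ((2 * m : ℕ) : ℤ) by exact_mod_cast hcoef).hasSum_mul_sum_range hterm
  have hfourier := hasSum_unitFourierCoeff_mul_exp_of_differentiable hg hp (z := z)
  simp only [unitFourierCoeff_mul_exp_eq_mul_jacobiTheta₂_term m τ z] at hfourier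
  rw [(hfourier hsum.summable).unique hsum]
  simp only [thetaComp_eq_tsum_jacobiTheta₂_term, Int.natCast_mul, Nat.cast_ofNat]

/-- Theta decomposition: a holomorphic function `φ(τ,z,w)` which is `1`-periodic in `z` and
satisfies the index-`m` elliptic transformation law in `z` has a theta decomposition
`φ(τ,z,w) = Σ_{ℓ=0}^{2m−1} h_ℓ(τ,w) θ_{m,ℓ}(τ,z)`. -/
theorem theta_decomposition (m : ℕ) (hm : 0 < m) (φ : ℂ → ℂ → ℂ → ℂ)
    (hτ_hol : ∀ z w : ℂ, DifferentiableOn ℂ (fun τ => φ τ z w) {τ : ℂ | 0 < τ.im})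
    (hz_hol : ∀ τ w : ℂ, 0 < τ.im → Differentiable ℂ (fun z => φ τ z w))
    (hw_hol : ∀ τ z : ℂ, 0 < τ.im → Differentiable ℂ (fun w => φ τ z w))
    (hperiodic : ∀ τ z w : ℂ, 0 < τ.im → φ τ (z + 1) w = φ τ z w)
    (helliptic : ∀ τ z w : ℂ, 0 < τ.im →
      Complex.exp (2 * (Real.pi : ℂ) * I * (m : ℂ) * (τ + 2 * z)) * φ τ (z + τ) w = φ τ z w) :
    ∀ τ z w : ℂ, 0 < τ.im →
      φ τ z w = ∑ ℓ ∈ Finset.range (2 * m),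
        thetaCoef m (ℓ : ℤ) φ τ w * thetaComp m (ℓ : ℤ) τ z :=
  theta_decomposition_general m hm φ hz_hol hperiodic helliptic
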